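/- Let s be as in the context (any of the four cases). Let 1 ≤ k ≤ D+1, α ∈ Δ_Z, β ∈ Δ̄_K^k ∩ Δ^C and δ ∈ Δ̄_K^k ∩ Δ^R. If α + β ∈ Δ then α + β ∈ Δ̄_K^k ∩ Δ^C, and if α + δ ∈ Δ then α + δ ∈ Δ̄_K^k ∩ Δ^R. -/

import Mathlib

/- Common framework: type A_l root system realized in ℝ^{ℕ} (coordinates 1,…,l+1 used),
   the Weyl group as permutations of ℕ acting by permuting coordinates, and the
   Weyl group element s = s₁s₂ of Proposition 4.2 (all four parity cases). -/

noncomputable section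

namespace DPW

/-- The ambient vector space (only coordinates 1,…,l+1 are used). -/
abbrev V : Type := ℕ → ℝ

/-- Standard basis vector e_i. -/
def evec (i : ℕ) : V := fun j => if j = i then 1 else 0

/-- The root e_i − e_j. -/
def rt (i j : ℕ) : V := evec i - evec j

/-- The root system Δ of type A_l. -/
def Delta (l : ℕ) : Set V :=
  {v | ∃ i j, 1 ≤ i ∧ i ≤ l + 1 ∧ 1 ≤ j ∧ j ≤ l + 1 ∧ i ≠ j ∧ v = rt i j}

/-- Positive roots Δ₊. -/
def DeltaPos (l : ℕ) : Set V :=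
  {v | ∃ i j, 1 ≤ i ∧ i < j ∧ j ≤ l + 1 ∧ v = rt i j}

/-- Negative roots Δ₋ = −Δ₊. -/
def DeltaNeg (l : ℕ) : Set V := {v | -v ∈ DeltaPos l}

/-- Action of a permutation on V : (σ·v)_j = v_{σ⁻¹(j)}. -/
def pact (σ : Equiv.Perm ℕ) (v : V) : V := fun j => v (σ⁻¹ j)

/-- row(e_a − e_b) = a. -/
def rowOf (v : V) : ℕ := sInf {a | v a = 1}

/-- col(e_a − e_b) = b. -/
def colOf (v : V) : ℕ := sInf {b | v b = (-1 : ℝ)}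

/-- Product of the simple reflections s_{α_i} = (i, i+1) for i in a list. -/
def swapProd (idxs : List ℕ) : Equiv.Perm ℕ :=
  (idxs.map (fun i => Equiv.swap i (i + 1))).prod

/-- The Weyl group element s = s₁s₂ (cases (i)–(iv) according to the parities of
    m = ⌊(l′−1)/2⌋ and l′; here p = l − l′ and s_γ = (m+1, m+p+2)). -/
def weylS (l l' : ℕ) : Equiv.Perm ℕ :=
  let m := (l' - 1) / 2
  let p := l - l'
  if m % 2 = 0 then
    if l' % 2 = 1 then
      -- case (i)
      (swapProd (List.range' 2 (m / 2) 2) * swapProd (List.range' (m + p + 2) (m / 2) 2)) *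
        (swapProd (List.range' 1 (m / 2) 2) * Equiv.swap (m + 1) (m + p + 2) *
          swapProd (List.range' (m + p + 3) (m / 2) 2))
    else
      -- case (ii)
      (swapProd (List.range' 2 (m / 2) 2) * swapProd (List.range' (m + p + 2) (m / 2 + 1) 2)) *
        (swapProd (List.range' 1 (m / 2) 2) * Equiv.swap (m + 1) (m + p + 2) *
          swapProd (List.range' (m + p + 3) (m / 2) 2))
  else
    if l' % 2 = 1 then
      -- case (iii)
      (swapProd (List.range' 1 ((m + 1) / 2) 2) *
          swapProd (List.range' (m + p + 2) ((m + 1) / 2) 2)) *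
        (swapProd (List.range' 2 ((m - 1) / 2) 2) * Equiv.swap (m + 1) (m + p + 2) *
          swapProd (List.range' (m + p + 3) ((m - 1) / 2) 2))
    else
      -- case (iv)
      (swapProd (List.range' 1 ((m + 1) / 2) 2) *
          swapProd (List.range' (m + p + 2) ((m + 1) / 2) 2)) *
        (swapProd (List.range' 2 ((m - 1) / 2) 2) * Equiv.swap (m + 1) (m + p + 2) *
          swapProd (List.range' (m + p + 3) ((m + 1) / 2) 2))

/-- Δ_s = {α ∈ Δ₊ : sα ∈ Δ₋}. -/
def DeltaS (l : ℕ) (s : Equiv.Perm ℕ) : Set V :=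
  {v ∈ DeltaPos l | pact s v ∈ DeltaNeg l}

/-- Δ_{s⁻¹} = {α ∈ Δ₊ : s⁻¹α ∈ Δ₋}. -/
def DeltaSinv (l : ℕ) (s : Equiv.Perm ℕ) : Set V :=
  {v ∈ DeltaPos l | pact s⁻¹ v ∈ DeltaNeg l}

/-- (Δ̄_K)₊ = {α ∈ Δ₊ : sα ≠ α}. -/
def DeltaKpos (l : ℕ) (s : Equiv.Perm ℕ) : Set V :=
  {v ∈ DeltaPos l | pact s v ≠ v}

/-- (Δ̄_K)₋ = −(Δ̄_K)₊. -/
def DeltaKneg (l : ℕ) (s : Equiv.Perm ℕ) : Set V := {v | -v ∈ DeltaKpos l s}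

/-- Δ^C = {α ∈ (Δ̄_K)₊ : row(sα) = row(α)}. -/
def DeltaC (l : ℕ) (s : Equiv.Perm ℕ) : Set V :=
  {v ∈ DeltaKpos l s | rowOf (pact s v) = rowOf v}

/-- Δ^R = {α ∈ (Δ̄_K)₊ : col(sα) = col(α)}. -/
def DeltaR (l : ℕ) (s : Equiv.Perm ℕ) : Set V :=
  {v ∈ DeltaKpos l s | colOf (pact s v) = colOf v}

/-- Δ^O = (Δ̄_K)₊ \ (Δ^C ∪ Δ^R). -/
def DeltaO (l : ℕ) (s : Equiv.Perm ℕ) : Set V :=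
  DeltaKpos l s \ (DeltaC l s ∪ DeltaR l s)

/-- Δ₁^O = {α ∈ Δ^O : row(α) ≥ m+p+2}. -/
def DeltaO1 (l : ℕ) (s : Equiv.Perm ℕ) (m p : ℕ) : Set V :=
  {v ∈ DeltaO l s | m + p + 2 ≤ rowOf v}

/-- Δ₂^O = {α ∈ Δ^O : col(α) ≤ m+1}. -/
def DeltaO2 (l : ℕ) (s : Equiv.Perm ℕ) (m : ℕ) : Set V :=
  {v ∈ DeltaO l s | colOf v ≤ m + 1}

/-- Δ₃^O = Δ^O \ (Δ₁^O ∪ Δ₂^O). -/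
def DeltaO3 (l : ℕ) (s : Equiv.Perm ℕ) (m p : ℕ) : Set V :=
  DeltaO l s \ (DeltaO1 l s m p ∪ DeltaO2 l s m)

/-- Δ̄_K^k = {α ∈ (Δ̄_K)₊ : s^{−j}α ∈ (Δ̄_K)₊ for 1 ≤ j ≤ k−1 and s^{−k}α ∈ (Δ̄_K)₋}. -/
def DeltaKk (l : ℕ) (s : Equiv.Perm ℕ) (k : ℕ) : Set V :=
  {v ∈ DeltaKpos l s |
    (∀ j, 1 ≤ j → j ≤ k - 1 → pact (s⁻¹ ^ j) v ∈ DeltaKpos l s) ∧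
      pact (s⁻¹ ^ k) v ∈ DeltaKneg l s}

/-- d(α) = min{k ≥ 1 : s^{−k}α ∈ Δ₋}. -/
def dd (l : ℕ) (s : Equiv.Perm ℕ) (v : V) : ℕ :=
  sInf {k | 1 ≤ k ∧ pact (s⁻¹ ^ k) v ∈ DeltaNeg l}

/-- Δ_Z = {e_i − e_j : m+2 ≤ i, j ≤ m+p+1, i ≠ j}. -/
def DeltaZ (m p : ℕ) : Set V :=
  {v | ∃ i j, m + 2 ≤ i ∧ i ≤ m + p + 1 ∧ m + 2 ≤ j ∧ j ≤ m + p + 1 ∧ i ≠ j ∧ v = rt i j}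

/-- The ⟨s⟩-orbit of a vector. -/
def orbitOf (s : Equiv.Perm ℕ) (v : V) : Set V := {w | ∃ n : ℤ, w = pact (s ^ n) v}

/-- The set P_κ (for κ ∈ Δ̄_K^k). -/
def Pk (l : ℕ) (s : Equiv.Perm ℕ) (k : ℕ) (κ : V) : Set (V × V) :=
  {q | (∃ i, 2 ≤ i ∧ i ≤ k - 1 ∧ q.1 ∈ DeltaKk l s i) ∧ q.2 ∈ DeltaKk l s k ∧ κ = q.1 + q.2}

/-- The set P′_κ (for κ ∈ Δ̄_K^k). -/
def Pk' (l : ℕ) (s : Equiv.Perm ℕ) (k : ℕ) (κ : V) : Set (V × V) :=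
  {q | q.1 ∈ DeltaKk l s k ∧ q.2 ∈ DeltaKk l s k ∧ κ = q.1 + q.2}

/-- The eigenvector v^λ of case (i) (m even, l′ = 2m+1 odd). -/
def vlam (m p : ℕ) (lam : ℂ) : ℕ → ℂ := fun j =>
  if j = 0 then 0
  else if j ≤ m + 1 then
    (if j % 2 = 1 then lam ^ ((4 * m + 5 - j) / 2) else lam ^ (j / 2))
  else if j ≤ m + p + 1 then 0
  else if j ≤ m + p + m + 2 then
    (if (j - (m + p)) % 2 = 0 then lam ^ ((m + (j - (m + p))) / 2)
     else lam ^ ((3 * m + 5 - (j - (m + p))) / 2))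
  else 0


/-! The element `s` fixes every index of `Δ_Z`, while the root `β = e_a − e_b ∈ Δ^C` has its row
`a` fixed and its column `b` moved by `s`. So `α + β` is a root only for `α = e_i − e_a`, and then
`α + β = e_i − e_b`: the row changes from one fixed index to another, and no index moved by `s`
lies between `i` and `a`. Along the orbit `s^{-t}β = e_a − e_{s^{-t}b}` the signs, and hence the
membership in `(Δ̄_K)₊` and `(Δ̄_K)₋`, are therefore the same for `e_i − e_{s^{-t}b}`. The case of
`Δ^R` is the mirror image. -/

lemma rt_apply (a b x : ℕ) : rt a b x = (if x = a then (1 : ℝ) else 0) - (if x = b then 1 else 0) :=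
  rfl

lemma pact_rt (σ : Equiv.Perm ℕ) (a b : ℕ) : pact σ (rt a b) = rt (σ a) (σ b) := by
  funext x
  simp only [pact, rt_apply, Equiv.Perm.inv_eq_iff_eq]

lemma neg_rt (a b : ℕ) : -rt a b = rt b a := by
  unfold rt; abel

lemma rt_add_rt (a b c : ℕ) : rt a b + rt b c = rt a c := by
  unfold rt; abel

lemma eq_of_rt_apply_eq_one {a b x : ℕ} (h : rt a b x = 1) : x = a := by
  rw [rt_apply] at h
  split_ifs at h <;> first | assumption | norm_num at h

lemma eq_of_rt_apply_eq_neg_one {a b x : ℕ} (h : rt a b x = -1) : x = b := by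
  rw [rt_apply] at h
  split_ifs at h <;> first | assumption | norm_num at h

lemma rt_apply_ne_two (a b x : ℕ) : rt a b x ≠ 2 := by
  rw [rt_apply]; split_ifs <;> norm_num

lemma rt_apply_self_left {a b : ℕ} (hab : a ≠ b) : rt a b a = 1 := by
  simp [rt_apply, hab]

lemma rt_apply_self_right {a b : ℕ} (hab : a ≠ b) : rt a b b = -1 := by
  simp [rt_apply, Ne.symm hab]

lemma rt_inj {a b c d : ℕ} (hab : a ≠ b) (h : rt a b = rt c d) : a = c ∧ b = d :=
  ⟨eq_of_rt_apply_eq_one (h ▸ rt_apply_self_left hab),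
    eq_of_rt_apply_eq_neg_one (h ▸ rt_apply_self_right hab)⟩

lemma rowOf_rt {a b : ℕ} (hab : a ≠ b) : rowOf (rt a b) = a := by
  have : {x | rt a b x = 1} = {a} :=
    Set.ext fun _ => ⟨eq_of_rt_apply_eq_one, by rintro rfl; exact rt_apply_self_left hab⟩
  rw [rowOf, this, csInf_singleton]

lemma colOf_rt {a b : ℕ} (hab : a ≠ b) : colOf (rt a b) = b := by
  have : {x | rt a b x = -1} = {b} :=
    Set.ext fun _ => ⟨eq_of_rt_apply_eq_neg_one, by rintro rfl; exact rt_apply_self_right hab⟩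
  rw [colOf, this, csInf_singleton]

lemma mem_Delta_rt {l a b : ℕ} (hab : a ≠ b) :
    rt a b ∈ Delta l ↔ 1 ≤ a ∧ a ≤ l + 1 ∧ 1 ≤ b ∧ b ≤ l + 1 := by
  constructor
  · rintro ⟨i, j, hi, hil, hj, hjl, -, h⟩
    obtain ⟨rfl, rfl⟩ := rt_inj hab h
    exact ⟨hi, hil, hj, hjl⟩
  · rintro ⟨ha, hal, hb, hbl⟩
    exact ⟨a, b, ha, hal, hb, hbl, hab, rfl⟩

lemma neg_mem_Delta {l : ℕ} {v : V} (hv : v ∈ Delta l) : -v ∈ Delta l := by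
  obtain ⟨i, j, hi, hil, hj, hjl, hij, rfl⟩ := hv
  exact ⟨j, i, hj, hjl, hi, hil, hij.symm, neg_rt i j⟩

lemma mem_DeltaPos_rt {l a b : ℕ} : rt a b ∈ DeltaPos l ↔ 1 ≤ a ∧ a < b ∧ b ≤ l + 1 := by
  constructor
  · rintro ⟨i, j, hi, hij, hjl, h⟩
    by_cases hab : a = b
    · subst hab
      have h0 : rt a a = 0 := sub_self _
      exact absurd (h0 ▸ h ▸ rt_apply_self_left hij.ne) (by norm_num)
    · obtain ⟨rfl, rfl⟩ := rt_inj hab h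
      exact ⟨hi, hij, hjl⟩
  · rintro ⟨ha, hab, hbl⟩
    exact ⟨a, b, ha, hab, hbl, rfl⟩

lemma eq_of_rt_add_rt_mem_Delta_of_col_ne {l i j a b : ℕ} (hij : i ≠ j) (hab : a ≠ b)
    (hbi : b ≠ i) (h : rt i j + rt a b ∈ Delta l) : a = j := by
  obtain ⟨x, y, -, -, -, -, -, hv⟩ := h
  by_contra haj
  by_cases hai : a = i
  · subst hai
    have h2 : (rt a j + rt a b) a = 2 := by
      simp only [Pi.add_apply, rt_apply_self_left hij, rt_apply_self_left hab]; norm_num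
    exact rt_apply_ne_two x y a (hv ▸ h2)
  · have hi : (rt i j + rt a b) i = 1 := by
      simp [rt_apply, hij, Ne.symm hai, Ne.symm hbi]
    have ha : (rt i j + rt a b) a = 1 := by
      simp [rt_apply, hai, haj, hab]
    exact hai ((eq_of_rt_apply_eq_one (hv ▸ ha)).trans (eq_of_rt_apply_eq_one (hv ▸ hi)).symm)

lemma eq_of_rt_add_rt_mem_Delta_of_row_ne {l i j a b : ℕ} (hij : i ≠ j) (hab : a ≠ b)
    (haj : a ≠ j) (h : rt i j + rt a b ∈ Delta l) : b = i := by
  have h' : rt j i + rt b a ∈ Delta l := by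
    simpa only [neg_add, neg_rt] using neg_mem_Delta h
  exact eq_of_rt_add_rt_mem_Delta_of_col_ne hij.symm hab.symm haj h'

section Fixed

variable {l : ℕ} {s : Equiv.Perm ℕ}

lemma pow_inv_apply_eq_self {a : ℕ} (ha : s a = a) (t : ℕ) : (s⁻¹ ^ t) a = a :=
  Equiv.Perm.pow_apply_eq_self_of_apply_eq_self (Equiv.Perm.inv_eq_iff_eq.mpr ha.symm) t

lemma apply_pow_inv_apply_ne {b : ℕ} (hb : s b ≠ b) (t : ℕ) :
    s ((s⁻¹ ^ t) b) ≠ (s⁻¹ ^ t) b := by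
  have key : ∀ y, s⁻¹ y = y ↔ s y = y := fun y => by
    rw [Equiv.Perm.inv_eq_iff_eq, eq_comm]
  rw [Ne, ← key, Equiv.Perm.apply_pow_apply_eq_iff, key]
  exact hb

lemma mem_DeltaKpos_rt {a b : ℕ} (hmoved : s a ≠ a ∨ s b ≠ b) :
    rt a b ∈ DeltaKpos l s ↔ 1 ≤ a ∧ a < b ∧ b ≤ l + 1 := by
  refine ⟨fun h => mem_DeltaPos_rt.mp h.1, fun h => ⟨mem_DeltaPos_rt.mpr h, ?_⟩⟩
  rw [pact_rt]
  intro heq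
  obtain ⟨ha, hb⟩ := rt_inj (s.injective.ne h.2.1.ne) heq
  tauto

lemma mem_DeltaKneg_rt {a b : ℕ} (hmoved : s a ≠ a ∨ s b ≠ b) :
    rt a b ∈ DeltaKneg l s ↔ 1 ≤ b ∧ b < a ∧ a ≤ l + 1 := by
  change -rt a b ∈ DeltaKpos l s ↔ _
  rw [neg_rt, mem_DeltaKpos_rt hmoved.symm]

lemma mem_DeltaC_rt_of_fixed {a b : ℕ} (ha : s a = a) (h : rt a b ∈ DeltaKpos l s) :
    rt a b ∈ DeltaC l s := by
  have hab : a ≠ b := (mem_DeltaPos_rt.mp h.1).2.1.ne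
  refine ⟨h, ?_⟩
  rw [pact_rt, ha, rowOf_rt (ha ▸ s.injective.ne hab), rowOf_rt hab]

lemma mem_DeltaR_rt_of_fixed {a b : ℕ} (hb : s b = b) (h : rt a b ∈ DeltaKpos l s) :
    rt a b ∈ DeltaR l s := by
  have hab : a ≠ b := (mem_DeltaPos_rt.mp h.1).2.1.ne
  refine ⟨h, ?_⟩
  rw [pact_rt, hb, colOf_rt (hb ▸ s.injective.ne hab), colOf_rt hab]

lemma fixed_moved_of_mem_DeltaC {a b : ℕ} (h : rt a b ∈ DeltaC l s) : s a = a ∧ s b ≠ b := by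
  obtain ⟨⟨hpos, hne⟩, hrow⟩ := h
  have hab : a ≠ b := (mem_DeltaPos_rt.mp hpos).2.1.ne
  rw [pact_rt, rowOf_rt (s.injective.ne hab), rowOf_rt hab] at hrow
  exact ⟨hrow, fun hb => hne (by rw [pact_rt, hrow, hb])⟩

lemma moved_fixed_of_mem_DeltaR {a b : ℕ} (h : rt a b ∈ DeltaR l s) : s a ≠ a ∧ s b = b := by
  obtain ⟨⟨hpos, hne⟩, hcol⟩ := h
  have hab : a ≠ b := (mem_DeltaPos_rt.mp hpos).2.1.ne
  rw [pact_rt, colOf_rt (s.injective.ne hab), colOf_rt hab] at hcol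
  exact ⟨fun ha => hne (by rw [pact_rt, hcol, ha]), hcol⟩

lemma rt_mem_DeltaKk_of_fixed_row {k a b c : ℕ} (ha : s a = a) (hb : s b ≠ b) (hc : s c = c)
    (hcl : 1 ≤ c ∧ c ≤ l + 1) (hsep : ∀ x, s x ≠ x → (a < x ↔ c < x))
    (h : rt a b ∈ DeltaKk l s k) : rt c b ∈ DeltaKk l s k := by
  obtain ⟨hpos, hiter, hneg⟩ := h
  have orbit (t : ℕ) : pact (s⁻¹ ^ t) (rt a b) = rt a ((s⁻¹ ^ t) b) ∧
      pact (s⁻¹ ^ t) (rt c b) = rt c ((s⁻¹ ^ t) b) := by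
    simp only [pact_rt, pow_inv_apply_eq_self ha, pow_inv_apply_eq_self hc, and_self]
  have moved (t : ℕ) := apply_pow_inv_apply_ne hb t
  have hsep' (t : ℕ) := hsep _ (moved t)
  have hne (t : ℕ) : (s⁻¹ ^ t) b ≠ c := fun h => moved t (h ▸ hc)
  refine ⟨?_, fun t ht1 ht2 => ?_, ?_⟩
  · have := hsep b hb
    rw [mem_DeltaKpos_rt (Or.inr hb)] at hpos ⊢
    omega
  · have := hiter t ht1 ht2
    rw [(orbit t).1, mem_DeltaKpos_rt (Or.inr (moved t))] at this
    rw [(orbit t).2, mem_DeltaKpos_rt (Or.inr (moved t))]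
    have := hsep' t
    omega
  · rw [(orbit k).1, mem_DeltaKneg_rt (Or.inr (moved k))] at hneg
    rw [(orbit k).2, mem_DeltaKneg_rt (Or.inr (moved k))]
    have := hsep' k
    have := hne k
    omega

lemma rt_mem_DeltaKk_of_fixed_col {k a b c : ℕ} (ha : s a ≠ a) (hb : s b = b) (hc : s c = c)
    (hcl : 1 ≤ c ∧ c ≤ l + 1) (hsep : ∀ x, s x ≠ x → (x < b ↔ x < c))
    (h : rt a b ∈ DeltaKk l s k) : rt a c ∈ DeltaKk l s k := by
  obtain ⟨hpos, hiter, hneg⟩ := h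
  have orbit (t : ℕ) : pact (s⁻¹ ^ t) (rt a b) = rt ((s⁻¹ ^ t) a) b ∧
      pact (s⁻¹ ^ t) (rt a c) = rt ((s⁻¹ ^ t) a) c := by
    simp only [pact_rt, pow_inv_apply_eq_self hb, pow_inv_apply_eq_self hc, and_self]
  have moved (t : ℕ) := apply_pow_inv_apply_ne ha t
  have hsep' (t : ℕ) := hsep _ (moved t)
  have hne (t : ℕ) : (s⁻¹ ^ t) a ≠ c := fun h => moved t (h ▸ hc)
  refine ⟨?_, fun t ht1 ht2 => ?_, ?_⟩
  · have := hsep a ha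
    rw [mem_DeltaKpos_rt (Or.inl ha)] at hpos ⊢
    omega
  · have := hiter t ht1 ht2
    rw [(orbit t).1, mem_DeltaKpos_rt (Or.inl (moved t))] at this
    rw [(orbit t).2, mem_DeltaKpos_rt (Or.inl (moved t))]
    have := hsep' t
    omega
  · rw [(orbit k).1, mem_DeltaKneg_rt (Or.inl (moved k))] at hneg
    rw [(orbit k).2, mem_DeltaKneg_rt (Or.inl (moved k))]
    have := hsep' k
    have := hne k
    omega

lemma lt_or_lt_of_apply_ne {m p x : ℕ} (hfix : ∀ x, m + 2 ≤ x → x ≤ m + p + 1 → s x = x)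
    (hx : s x ≠ x) : x < m + 2 ∨ m + p + 1 < x := by
  by_contra h
  exact hx (hfix x (by omega) (by omega))

theorem add_mem_DeltaKk_inter_DeltaC {m p : ℕ}
    (hfix : ∀ x, m + 2 ≤ x → x ≤ m + p + 1 → s x = x) (k : ℕ) {α β : V} (hα : α ∈ DeltaZ m p)
    (hβ : β ∈ DeltaKk l s k ∩ DeltaC l s) (hsum : α + β ∈ Delta l) :
    α + β ∈ DeltaKk l s k ∩ DeltaC l s := by
  obtain ⟨i, j, hi1, hi2, hj1, hj2, hij, rfl⟩ := hα
  obtain ⟨hβk, hβC⟩ := hβ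
  obtain ⟨a, b, -, hab, -, rfl⟩ := hβC.1.1
  obtain ⟨ha, hb⟩ := fixed_moved_of_mem_DeltaC hβC
  have hb' := lt_or_lt_of_apply_ne hfix hb
  obtain rfl : a = j := eq_of_rt_add_rt_mem_Delta_of_col_ne hij hab.ne (by omega) hsum
  rw [rt_add_rt] at hsum ⊢
  have hi : s i = i := hfix i hi1 hi2
  have hil := (mem_Delta_rt (by omega)).mp hsum
  have hk := rt_mem_DeltaKk_of_fixed_row ha hb hi ⟨hil.1, hil.2.1⟩
    (fun x hx => by have := lt_or_lt_of_apply_ne hfix hx; omega) hβk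
  exact ⟨hk, mem_DeltaC_rt_of_fixed hi hk.1⟩

theorem add_mem_DeltaKk_inter_DeltaR {m p : ℕ}
    (hfix : ∀ x, m + 2 ≤ x → x ≤ m + p + 1 → s x = x) (k : ℕ) {α δ : V} (hα : α ∈ DeltaZ m p)
    (hδ : δ ∈ DeltaKk l s k ∩ DeltaR l s) (hsum : α + δ ∈ Delta l) :
    α + δ ∈ DeltaKk l s k ∩ DeltaR l s := by
  obtain ⟨i, j, hi1, hi2, hj1, hj2, hij, rfl⟩ := hα
  obtain ⟨hδk, hδR⟩ := hδ
  obtain ⟨a, b, -, hab, -, rfl⟩ := hδR.1.1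
  obtain ⟨ha, hb⟩ := moved_fixed_of_mem_DeltaR hδR
  have ha' := lt_or_lt_of_apply_ne hfix ha
  obtain rfl : b = i := eq_of_rt_add_rt_mem_Delta_of_row_ne hij hab.ne (by omega) hsum
  rw [add_comm, rt_add_rt] at hsum ⊢
  have hj : s j = j := hfix j hj1 hj2
  have hjl := (mem_Delta_rt (by omega)).mp hsum
  have hk := rt_mem_DeltaKk_of_fixed_col ha hb hj ⟨hjl.2.2.1, hjl.2.2.2⟩
    (fun x hx => by have := lt_or_lt_of_apply_ne hfix hx; omega) hδk
  exact ⟨hk, mem_DeltaR_rt_of_fixed hj hk.1⟩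

end Fixed

lemma swapProd_apply_of_forall_ne {L : List ℕ} {x : ℕ} (h : ∀ i ∈ L, i ≠ x ∧ i + 1 ≠ x) :
    swapProd L x = x := by
  induction L with
  | nil => rfl
  | cons a t ih =>
    have ha := h a List.mem_cons_self
    change Equiv.swap a (a + 1) (swapProd t x) = x
    rw [ih fun i hi => h i (List.mem_cons_of_mem _ hi)]
    exact Equiv.swap_apply_of_ne_of_ne (Ne.symm ha.1) (Ne.symm ha.2)

lemma swapProd_range'_apply {a n x : ℕ} (h : x < a ∨ a + 2 * n ≤ x) :
    swapProd (List.range' a n 2) x = x := by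
  refine swapProd_apply_of_forall_ne fun i hi => ?_
  obtain ⟨t, ht, rfl⟩ := List.mem_range'.mp hi
  omega

lemma weylS_apply_eq_self {l l' m p x : ℕ} (hm : m = (l' - 1) / 2) (hp : p = l - l')
    (hx1 : m + 2 ≤ x) (hx2 : x ≤ m + p + 1) : weylS l l' x = x := by
  have hγ : Equiv.swap (m + 1) (m + p + 2) x = x :=
    Equiv.swap_apply_of_ne_of_ne (by omega) (by omega)
  simp only [weylS, ← hm, ← hp]
  split_ifs <;>
    simp (disch := omega) only [Equiv.Perm.mul_apply, swapProd_range'_apply, hγ]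

theorem stmt9_general (l l' m p : ℕ) (hm : m = (l' - 1) / 2) (hp : p = l - l') :
    let s := weylS l l'
    ∀ k, 1 ≤ k →
      (∀ α ∈ DeltaZ m p, ∀ β ∈ DeltaKk l s k ∩ DeltaC l s,
        α + β ∈ Delta l → α + β ∈ DeltaKk l s k ∩ DeltaC l s) ∧
        (∀ α ∈ DeltaZ m p, ∀ δ ∈ DeltaKk l s k ∩ DeltaR l s,
          α + δ ∈ Delta l → α + δ ∈ DeltaKk l s k ∩ DeltaR l s) := by
  intro s k _
  have hfix : ∀ x, m + 2 ≤ x → x ≤ m + p + 1 → s x = x := fun _ =>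
    weylS_apply_eq_self hm hp
  exact ⟨fun _ hα _ hβ => add_mem_DeltaKk_inter_DeltaC hfix k hα hβ,
    fun _ hα _ hδ => add_mem_DeltaKk_inter_DeltaR hfix k hα hδ⟩

/-- for α ∈ Δ_Z, β ∈ Δ̄_K^k ∩ Δ^C and δ ∈ Δ̄_K^k ∩ Δ^R: if α + β ∈ Δ then
α + β ∈ Δ̄_K^k ∩ Δ^C, and if α + δ ∈ Δ then α + δ ∈ Δ̄_K^k ∩ Δ^R. -/
theorem stmt9 (l l' m p : ℕ) (h5 : 5 ≤ l') (hll : l' ≤ l)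
    (hm : m = (l' - 1) / 2) (hp : p = l - l') :
    let s := weylS l l'
    ∀ k, 1 ≤ k →
      (∀ α ∈ DeltaZ m p, ∀ β ∈ DeltaKk l s k ∩ DeltaC l s,
        α + β ∈ Delta l → α + β ∈ DeltaKk l s k ∩ DeltaC l s) ∧
        (∀ α ∈ DeltaZ m p, ∀ δ ∈ DeltaKk l s k ∩ DeltaR l s,
          α + δ ∈ Delta l → α + δ ∈ DeltaKk l s k ∩ DeltaR l s) :=
  stmt9_general l l' m p hm hp
end DPW
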